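/- For positive definite matrices A and B, the Bures-Wasserstein distance satisfies d_BW(A,B) = ‖A^{1/2} − B^{1/2}U‖_F, where d_BW(A,B) = [tr(A) + tr(B) − 2 tr((A^{1/2}BA^{1/2})^{1/2})]^{1/2}, ‖·‖_F is the Frobenius norm, and U is the unitary from the polar decomposition B^{1/2}A^{1/2} = U(A^{1/2}BA^{1/2})^{1/2}. -/

import Mathlib

open Matrix Filter Asymptotics
open scoped ComplexOrder

/-- The PSD square root of a matrix (0 if not PSD). -/
noncomputable def msqrt {n : ℕ} (M : Matrix (Fin n) (Fin n) ℂ) : Matrix (Fin n) (Fin n) ℂ :=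
  letI := Classical.propDecidable M.PosSemidef
  if h : M.PosSemidef then
    (h.1.eigenvectorUnitary : Matrix (Fin n) (Fin n) ℂ) *
      diagonal (((↑) : ℝ → ℂ) ∘ Real.sqrt ∘ h.1.eigenvalues) *
      (star (h.1.eigenvectorUnitary : Matrix (Fin n) (Fin n) ℂ)) else 0

/-- `(AB)^{1/2} := A^{1/2} (A^{1/2} B A^{1/2})^{1/2} A^{-1/2}`. -/
noncomputable def sqAB {n : ℕ} (A B : Matrix (Fin n) (Fin n) ℂ) : Matrix (Fin n) (Fin n) ℂ :=
  msqrt A * msqrt (msqrt A * B * msqrt A) * (msqrt A)⁻¹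

/-- Bures-Wasserstein geodesic `A ◇_t B`. -/
noncomputable def geo {n : ℕ} (A B : Matrix (Fin n) (Fin n) ℂ) (t : ℝ) : Matrix (Fin n) (Fin n) ℂ :=
  ((1 - t)^2 : ℝ) • A + (t^2 : ℝ) • B + (t * (1 - t) : ℝ) • (sqAB A B + (sqAB A B)ᴴ)

/-- Bures-Wasserstein distance. -/
noncomputable def dBW {n : ℕ} (A B : Matrix (Fin n) (Fin n) ℂ) : ℝ :=
  Real.sqrt ((Matrix.trace A).re + (Matrix.trace B).re -
    2 * (Matrix.trace (msqrt (msqrt A * B * msqrt A))).re)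

/-!
If `B^{1/2} A^{1/2} = U M` with `M = (A^{1/2} B A^{1/2})^{1/2}` Hermitian and `U` unitary, then
both cross terms in the expansion of `tr ((A^{1/2} - B^{1/2} U)ᴴ (A^{1/2} - B^{1/2} U))` have
trace `tr M`: one is `Uᴴ (B^{1/2} A^{1/2}) = M`, the other is its adjoint `A^{1/2} B^{1/2} U = M`.
The remaining two terms are `tr A` and `tr (Uᴴ B U) = tr B`.
-/

section MatrixSqrt

variable {n : ℕ} {M : Matrix (Fin n) (Fin n) ℂ}

lemma msqrt_mul_self (h : M.PosSemidef) : msqrt M * msqrt M = M := by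
  unfold msqrt
  rw [dif_pos h]
  set V := (h.1.eigenvectorUnitary : Matrix (Fin n) (Fin n) ℂ)
  have hV : star V * V = 1 := by simp [V]
  rw [show ∀ D : Matrix (Fin n) (Fin n) ℂ, V * D * star V * (V * D * star V)
      = V * D * (star V * V) * D * star V from fun D => by simp only [mul_assoc],
    hV, mul_one, mul_assoc V, diagonal_mul_diagonal]
  conv_rhs => rw [h.1.spectral_theorem, Unitary.conjStarAlgAut_apply]
  congr 3
  funext i
  simp only [Function.comp_apply]
  rw [← Complex.ofReal_mul, Real.mul_self_sqrt (h.eigenvalues_nonneg i)]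
  rfl

lemma isHermitian_msqrt (h : M.PosSemidef) : (msqrt M).IsHermitian := by
  unfold msqrt IsHermitian
  rw [dif_pos h]
  simp only [conjTranspose_mul, star_eq_conjTranspose, conjTranspose_conjTranspose,
    diagonal_conjTranspose, mul_assoc]
  congr 3
  funext i
  simp [Complex.conj_ofReal]

end MatrixSqrt

lemma trace_conjTranspose_mul_self_sub_mul_of_polar {m R : Type*} [Fintype m] [DecidableEq m]
    [CommRing R] [StarRing R] {P Q U M : Matrix m m R} (hP : P.IsHermitian) (hQ : Q.IsHermitian)
    (hU : U ∈ unitaryGroup m R) (hM : M.IsHermitian) (hpolar : Q * P = U * M) :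
    trace ((P - Q * U)ᴴ * (P - Q * U)) = trace (P * P) + trace (Q * Q) - 2 * trace M := by
  have hUU : Uᴴ * U = 1 := mem_unitaryGroup_iff'.mp hU
  have hUU' : U * Uᴴ = 1 := mem_unitaryGroup_iff.mp hU
  have hpolar' : P * Q = M * Uᴴ := by
    simpa [conjTranspose_mul, hP.eq, hQ.eq, hM.eq] using congrArg conjTranspose hpolar
  have hexpand : (P - Q * U)ᴴ * (P - Q * U) =
      P * P - P * Q * U - Uᴴ * (Q * P) + Uᴴ * (Q * Q) * U := by
    rw [conjTranspose_sub, conjTranspose_mul, hP.eq, hQ.eq]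
    noncomm_ring
  have hcross₁ : trace (P * Q * U) = trace M := by
    rw [hpolar', mul_assoc, hUU, mul_one]
  have hcross₂ : trace (Uᴴ * (Q * P)) = trace M := by
    rw [hpolar, ← mul_assoc, hUU, one_mul]
  have hconj : trace (Uᴴ * (Q * Q) * U) = trace (Q * Q) := by
    rw [trace_mul_cycle, hUU', one_mul]
  rw [hexpand, trace_add, trace_sub, trace_sub, hcross₁, hcross₂, hconj]
  ring

theorem stmt7 {n : ℕ} (A B U : Matrix (Fin n) (Fin n) ℂ)
    (hA : A.PosDef) (hB : B.PosDef) (hU : U ∈ Matrix.unitaryGroup (Fin n) ℂ)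
    (hpolar : msqrt B * msqrt A = U * msqrt (msqrt A * B * msqrt A)) :
    dBW A B =
      Real.sqrt ((Matrix.trace ((msqrt A - msqrt B * U)ᴴ *
        (msqrt A - msqrt B * U))).re) := by
  have hsA := isHermitian_msqrt hA.posSemidef
  have hmiddle : (msqrt A * B * msqrt A).PosSemidef := by
    simpa only [hsA.eq] using hB.posSemidef.mul_mul_conjTranspose_same (msqrt A)
  rw [trace_conjTranspose_mul_self_sub_mul_of_polar hsA (isHermitian_msqrt hB.posSemidef) hU
    (isHermitian_msqrt hmiddle) hpolar, msqrt_mul_self hA.posSemidef,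
    msqrt_mul_self hB.posSemidef, dBW]
  simp
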